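/- Let J : [0,∞) → ℝ be nonnegative with J(r) = 0 for r > 1, and let J_δ(|ξ|) = (c/δ⁴)·J(|ξ|/δ) in ℝ². For x ∈ ℝ², 0 < s_x < δ, and a unit vector n, the circular-segment integral ∫_{D_δ} J_δ(|x − y|)·[|(y−x)·p|² − |(y−x̄)·n|² + |(x−x̄)·n|²] dy, where x̄ = x + s_x·n, p ⊥ n is a unit vector, and D_δ = {x + (r cos θ, r sin θ) : s_x < r < δ, |θ| ≤ arccos(s_x/r)} (written in coordinates with n along θ = 0), equals 2∫_{s_x}^{δ} J_δ(r)·r²·√(1 − (s_x/r)²)·s_x dr, and in particular is nonnegative. -/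

import Mathlib

/-!
In the coordinates `y = x + r cos θ • n + r sin θ • p` the segment becomes
`s < r < δ, |θ| < arccos (s / r)` and the integrand becomes `J_δ(r) · I(r, θ)` with
`I = r² sin² θ - r² cos² θ + 2 r s cos θ`. An antiderivative in `θ` is
`2 r s sin θ - r² sin θ cos θ`; on the slice, where `cos θ = s / r` at the endpoints, it gives
`∫ I dθ = 2 r s √(1 - (s/r)²)`, and with the Jacobian `r` Fubini yields the radial formula.

Nothing is assumed about integrability of `J`, so both sides may be the junk value `0`. This is
consistent: by Jordan's inequality the slice has width `2 arccos (s/r) ≤ π √(1 - (s/r)²)`, and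
`|I| ≤ 2δ²` on the segment, so the planar integrand is integrable as soon as the radial one is.
-/

open Real MeasureTheory Set Module
open scoped RealInnerProductSpace ENNReal

theorem abs_lt_arccos_iff {y θ : ℝ} (hθ : |θ| < π) : |θ| < arccos y ↔ y < cos θ := by
  rw [← cos_abs]
  constructor
  · intro h
    by_contra! hle
    have := arccos_le_arccos hle
    rw [arccos_cos (abs_nonneg θ) hθ.le] at this
    linarith
  · intro h
    by_contra! hle
    rcases le_or_gt y (-1) with hy | hy
    · rw [arccos_of_le_neg_one hy] at hle; linarith
    · have hy1 : y ≤ 1 := h.le.trans (cos_le_one _)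
      have := cos_le_cos_of_nonneg_of_le_pi (arccos_nonneg y) hθ.le hle
      rw [cos_arccos hy.le hy1] at this
      linarith

theorem two_mul_arccos_le {y : ℝ} (hy : 0 ≤ y) : 2 * arccos y ≤ π * √(1 - y ^ 2) := by
  have hjordan := mul_le_sin (arccos_nonneg y) (arccos_le_pi_div_two.mpr hy)
  rw [sin_arccos] at hjordan
  have := pi_pos
  rw [div_mul_eq_mul_div, div_le_iff₀ this] at hjordan
  linarith

theorem mul_two_mul_arccos_le {s r : ℝ} (hs : 0 < s) (hsr : s ≤ r) :
    r * (2 * arccos (s / r)) ≤ π / s ^ 2 * (r ^ 2 * √(1 - (s / r) ^ 2) * s) := by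
  have hr : 0 < r := hs.trans_le hsr
  have hwidth := two_mul_arccos_le (div_nonneg hs.le hr.le)
  have hrs : r * s ^ 2 ≤ r ^ 2 * s := by
    nlinarith [mul_nonneg (mul_pos hr hs).le (sub_nonneg.mpr hsr)]
  calc r * (2 * arccos (s / r)) ≤ r * (π * √(1 - (s / r) ^ 2)) := by gcongr
    _ = π / s ^ 2 * (r * s ^ 2 * √(1 - (s / r) ^ 2)) := by field_simp
    _ ≤ π / s ^ 2 * (r ^ 2 * s * √(1 - (s / r) ^ 2)) := by gcongr
    _ = π / s ^ 2 * (r ^ 2 * √(1 - (s / r) ^ 2) * s) := by ring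

theorem aemeasurable_of_mul_of_ne_zero {α : Type*} [MeasurableSpace α] {μ : Measure α}
    {t : Set α} (ht : MeasurableSet t) {f g : α → ℝ}
    (hfg : AEMeasurable (fun a ↦ f a * g a) (μ.restrict t)) (hg : Measurable g)
    (hg0 : ∀ a ∈ t, g a ≠ 0) : AEMeasurable f (μ.restrict t) := by
  refine (hfg.div hg.aemeasurable).congr ?_
  filter_upwards [ae_restrict_mem ht] with a ha
  exact mul_div_cancel_right₀ _ (hg0 a ha)

theorem setIntegral_comp_polarCoord_symm (f : ℝ × ℝ → ℝ) {A : Set (ℝ × ℝ)}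
    (hA : MeasurableSet A) :
    ∫ q in A, f q =
      ∫ q in polarCoord.symm ⁻¹' A ∩ polarCoord.target, q.1 * f (polarCoord.symm q) := by
  have hA' : MeasurableSet (polarCoord.symm ⁻¹' A) :=
    continuous_polarCoord_symm.measurable hA
  rw [← integral_indicator hA, ← integral_comp_polarCoord_symm, inter_comm,
    ← setIntegral_indicator hA']
  congr 1 with q
  by_cases hq : polarCoord.symm q ∈ A
  · rw [indicator_of_mem hq, indicator_of_mem (show q ∈ polarCoord.symm ⁻¹' A from hq),
      smul_eq_mul]
  · rw [indicator_of_notMem hq, indicator_of_notMem (show q ∉ polarCoord.symm ⁻¹' A from hq),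
      smul_zero]

/-- The segment `D_δ` in polar coordinates `(r, θ)` about `x`, with `θ = 0` along `n`. -/
noncomputable def polarSegment (s δ : ℝ) : Set (ℝ × ℝ) :=
  {q | q.1 ∈ Ioo s δ ∧ |q.2| < arccos (s / q.1)}

/-- The integrand `I_δ` at `y = x + r cos θ • n + r sin θ • p`, where `q = (r, θ)`. -/
noncomputable def segmentWeight (s : ℝ) (q : ℝ × ℝ) : ℝ :=
  (q.1 * sin q.2) ^ 2 - (q.1 * cos q.2 - s) ^ 2 + s ^ 2

section PolarSegment

variable {s δ : ℝ}

theorem measurableSet_polarSegment : MeasurableSet (polarSegment s δ) :=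
  (measurableSet_Ioo.preimage measurable_fst).inter
    (measurableSet_lt (f := fun q : ℝ × ℝ ↦ |q.2|) (by fun_prop) (by fun_prop))

theorem polarSegment_subset_target (hs : 0 ≤ s) : polarSegment s δ ⊆ polarCoord.target := by
  rintro q ⟨hr, hθ⟩
  exact ⟨hs.trans_lt hr.1, abs_lt.mp (hθ.trans_le (arccos_le_pi _))⟩

theorem mem_polarSegment_iff {q : ℝ × ℝ} (hq : q ∈ polarCoord.target) :
    q ∈ polarSegment s δ ↔ q.1 < δ ∧ s < q.1 * cos q.2 := by
  obtain ⟨hr, hθ⟩ := hq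
  have hr : 0 < q.1 := hr
  rw [polarSegment, mem_ofPred_eq, abs_lt_arccos_iff (abs_lt.mpr hθ), div_lt_iff₀ hr, mul_comm]
  constructor
  · rintro ⟨⟨-, hδ⟩, h⟩; exact ⟨hδ, h⟩
  · rintro ⟨hδ, h⟩
    exact ⟨⟨h.trans_le (mul_le_of_le_one_right hr.le (cos_le_one _)), hδ⟩, h⟩

theorem indicator_polarSegment_apply {M : Type*} [Zero M] (G : ℝ × ℝ → M) (r θ : ℝ) :
    (polarSegment s δ).indicator G (r, θ) = (Ioo s δ).indicator
      (fun r ↦ (Ioo (-arccos (s / r)) (arccos (s / r))).indicator (fun θ ↦ G (r, θ)) θ) r := by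
  by_cases hr : r ∈ Ioo s δ
  · by_cases hθ : θ ∈ Ioo (-arccos (s / r)) (arccos (s / r))
    · have hmem : (r, θ) ∈ polarSegment s δ := ⟨hr, abs_lt.mpr hθ⟩
      rw [indicator_of_mem hr, indicator_of_mem hθ, indicator_of_mem hmem]
    · rw [indicator_of_mem hr, indicator_of_notMem hθ,
        indicator_of_notMem fun h ↦ hθ (abs_lt.mp h.2)]
  · rw [indicator_of_notMem hr, indicator_of_notMem fun h ↦ hr h.1]

theorem setIntegral_polarSegment_eq (hsδ : s ≤ δ) {F : ℝ × ℝ → ℝ}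
    (hF : IntegrableOn F (polarSegment s δ)) :
    ∫ q in polarSegment s δ, F q =
      ∫ r in s..δ, ∫ θ in -arccos (s / r)..arccos (s / r), F (r, θ) := by
  rw [← integral_indicator measurableSet_polarSegment, Measure.volume_eq_prod,
    integral_prod _ ((integrable_indicator_iff measurableSet_polarSegment).mpr hF)]
  have hslice (r : ℝ) : ∫ θ, (polarSegment s δ).indicator F (r, θ) = (Ioo s δ).indicator
      (fun r ↦ ∫ θ in -arccos (s / r)..arccos (s / r), F (r, θ)) r := by
    simp_rw [indicator_polarSegment_apply]
    by_cases hr : r ∈ Ioo s δ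
    · simp only [indicator_of_mem hr]
      rw [integral_indicator measurableSet_Ioo, intervalIntegral.integral_of_le
        (neg_le_self (arccos_nonneg _)), integral_Ioc_eq_integral_Ioo]
    · simp [indicator_of_notMem hr]
  simp_rw [hslice]
  rw [integral_indicator measurableSet_Ioo, intervalIntegral.integral_of_le hsδ,
    integral_Ioc_eq_integral_Ioo]

theorem integral_segmentWeight {r s : ℝ} (hr : 0 < r) (hsr : |s| ≤ r) :
    ∫ θ in -arccos (s / r)..arccos (s / r), segmentWeight s (r, θ) =
      2 * (r * s * √(1 - (s / r) ^ 2)) := by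
  have hderiv (θ : ℝ) : HasDerivAt (fun θ ↦ 2 * r * s * sin θ - r ^ 2 * (sin θ * cos θ))
      (segmentWeight s (r, θ)) θ := by
    refine (((hasDerivAt_sin θ).const_mul (2 * r * s)).sub
      (((hasDerivAt_sin θ).mul (hasDerivAt_cos θ)).const_mul (r ^ 2))).congr_deriv ?_
    show _ = (r * sin θ) ^ 2 - (r * cos θ - s) ^ 2 + s ^ 2
    ring
  have hcos : cos (arccos (s / r)) = s / r := by
    rw [abs_le] at hsr
    exact cos_arccos (by rw [le_div_iff₀ hr]; linarith) (by rw [div_le_iff₀ hr]; linarith)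
  rw [intervalIntegral.integral_eq_sub_of_hasDerivAt (fun θ _ ↦ hderiv θ)
    (Continuous.intervalIntegrable (by unfold segmentWeight; fun_prop) _ _)]
  simp only [sin_neg, cos_neg, hcos, sin_arccos]
  field_simp
  ring

theorem abs_segmentWeight_le {q : ℝ × ℝ} (hs : 0 < s) (hq : q ∈ polarSegment s δ) :
    |segmentWeight s q| ≤ 2 * δ ^ 2 := by
  obtain ⟨hδ, hcos⟩ := (mem_polarSegment_iff (polarSegment_subset_target hs.le hq)).mp hq
  have hr : 0 < q.1 := hs.trans hq.1.1
  have hcos_le : q.1 * cos q.2 ≤ q.1 := mul_le_of_le_one_right hr.le (cos_le_one _)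
  have hsin : (q.1 * sin q.2) ^ 2 ≤ δ ^ 2 := by
    rw [mul_pow]; nlinarith [sin_sq_le_one q.2]
  have hcos' : (q.1 * cos q.2 - s) ^ 2 ≤ δ ^ 2 := by nlinarith
  have hs' : s ^ 2 ≤ δ ^ 2 := by nlinarith
  rw [segmentWeight, abs_le]
  constructor <;> nlinarith [sq_nonneg (q.1 * sin q.2), sq_nonneg (q.1 * cos q.2 - s)]

theorem lintegral_lintegral_indicator_polarSegment (g : ℝ → ℝ≥0∞) :
    ∫⁻ r, ∫⁻ θ, (polarSegment s δ).indicator (fun q ↦ g q.1) (r, θ) =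
      ∫⁻ r in Ioo s δ, g r * ENNReal.ofReal (2 * arccos (s / r)) := by
  rw [← lintegral_indicator measurableSet_Ioo]
  congr 1 with r
  simp_rw [indicator_polarSegment_apply]
  by_cases hr : r ∈ Ioo s δ
  · simp only [indicator_of_mem hr]
    rw [lintegral_indicator_const measurableSet_Ioo, volume_Ioo, sub_neg_eq_add, two_mul]
  · simp [indicator_of_notMem hr]

theorem setLIntegral_polarSegment_enorm_le (hs : 0 < s) (K : ℝ → ℝ) :
    ∫⁻ q in polarSegment s δ, ‖q.1 * (K q.1 * segmentWeight s q)‖ₑ ≤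
      ENNReal.ofReal (2 * δ ^ 2 * (π / s ^ 2)) *
        ∫⁻ r in Ioo s δ, ‖K r * r ^ 2 * √(1 - (s / r) ^ 2) * s‖ₑ := by
  set B : ℝ → ℝ := fun r ↦ 2 * δ ^ 2 * (r * |K r|)
  calc ∫⁻ q in polarSegment s δ, ‖q.1 * (K q.1 * segmentWeight s q)‖ₑ
      ≤ ∫⁻ q in polarSegment s δ, ENNReal.ofReal (B q.1) := by
        refine setLIntegral_mono' measurableSet_polarSegment fun q hq ↦ ?_
        rw [← ofReal_norm]
        refine ENNReal.ofReal_le_ofReal ?_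
        have hr : 0 < q.1 := hs.trans hq.1.1
        rw [Real.norm_eq_abs, abs_mul, abs_mul, abs_of_pos hr]
        have := mul_le_mul_of_nonneg_left (abs_segmentWeight_le hs hq)
          (mul_nonneg hr.le (abs_nonneg (K q.1)))
        simp only [B]
        linarith
    _ ≤ ∫⁻ r, ∫⁻ θ, (polarSegment s δ).indicator (fun q ↦ ENNReal.ofReal (B q.1)) (r, θ) := by
        rw [← lintegral_indicator measurableSet_polarSegment, Measure.volume_eq_prod]
        exact lintegral_prod_le _
    _ = ∫⁻ r in Ioo s δ, ENNReal.ofReal (B r * (2 * arccos (s / r))) := by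
        rw [lintegral_lintegral_indicator_polarSegment fun r ↦ ENNReal.ofReal (B r)]
        refine setLIntegral_congr_fun measurableSet_Ioo fun r hr ↦ ?_
        have hB : 0 ≤ B r := by simp only [B]; have := hs.trans hr.1; positivity
        rw [ENNReal.ofReal_mul hB]
    _ ≤ ∫⁻ r in Ioo s δ, ENNReal.ofReal (2 * δ ^ 2 * (π / s ^ 2)) *
          ‖K r * r ^ 2 * √(1 - (s / r) ^ 2) * s‖ₑ := by
        refine setLIntegral_mono' measurableSet_Ioo fun r hr ↦ ?_
        have hr0 : 0 < r := hs.trans hr.1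
        rw [← ofReal_norm, ← ENNReal.ofReal_mul (by positivity)]
        refine ENNReal.ofReal_le_ofReal ?_
        have hwidth := mul_two_mul_arccos_le hs hr.1.le
        rw [Real.norm_eq_abs, abs_mul, abs_mul, abs_mul, abs_of_pos hs,
          abs_of_nonneg (sqrt_nonneg _), abs_of_nonneg (sq_nonneg r)]
        calc B r * (2 * arccos (s / r)) = 2 * δ ^ 2 * |K r| * (r * (2 * arccos (s / r))) := by
              ring
          _ ≤ 2 * δ ^ 2 * |K r| * (π / s ^ 2 * (r ^ 2 * √(1 - (s / r) ^ 2) * s)) := by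
              gcongr
          _ = _ := by ring
    _ = _ := lintegral_const_mul' _ _ ENNReal.ofReal_ne_top

theorem integrableOn_polarSegment (hs : 0 < s) (hsδ : s ≤ δ) {K : ℝ → ℝ}
    (hK : IntervalIntegrable (fun r ↦ K r * r ^ 2 * √(1 - (s / r) ^ 2) * s) volume s δ) :
    IntegrableOn (fun q ↦ q.1 * (K q.1 * segmentWeight s q)) (polarSegment s δ) := by
  rw [intervalIntegrable_iff_integrableOn_Ioo_of_le hsδ] at hK
  have hKmeas : AEMeasurable K (volume.restrict (Ioo s δ)) := by
    refine aemeasurable_of_mul_of_ne_zero measurableSet_Ioo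
      (g := fun r ↦ r ^ 2 * √(1 - (s / r) ^ 2) * s)
      (by simpa only [mul_assoc] using hK.aemeasurable) (by fun_prop) fun r hr ↦ ?_
    have hr0 : 0 < r := hs.trans hr.1
    have hsr : s / r < 1 := (div_lt_one hr0).mpr hr.1
    have : 0 < √(1 - (s / r) ^ 2) := sqrt_pos.mpr (by nlinarith [div_pos hs hr0])
    positivity
  have hKfst : AEMeasurable (fun q : ℝ × ℝ ↦ K q.1) (volume.restrict (polarSegment s δ)) := by
    have h := hKmeas.comp_fst (ν := (volume : Measure ℝ))
    have hprod : (volume.restrict (Ioo s δ)).prod (volume : Measure ℝ) =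
        volume.restrict (Ioo s δ ×ˢ univ) := by
      rw [Measure.volume_eq_prod, ← Measure.prod_restrict, Measure.restrict_univ]
    rw [hprod] at h
    exact h.mono_measure
      (Measure.restrict_mono (fun _ hq ↦ mk_mem_prod hq.1 (mem_univ _)) le_rfl)
  refine ⟨(measurable_fst.aemeasurable.mul
    (hKfst.mul (by unfold segmentWeight; fun_prop))).aestronglyMeasurable, ?_⟩
  exact (setLIntegral_polarSegment_enorm_le hs K).trans_lt
    (ENNReal.mul_lt_top ENNReal.ofReal_lt_top hK.2)

theorem integral_polarSegment (hs : 0 < s) (hsδ : s ≤ δ) (K : ℝ → ℝ) :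
    ∫ q in polarSegment s δ, q.1 * (K q.1 * segmentWeight s q) =
      2 * ∫ r in s..δ, K r * r ^ 2 * √(1 - (s / r) ^ 2) * s := by
  by_cases hF : IntegrableOn (fun q ↦ q.1 * (K q.1 * segmentWeight s q)) (polarSegment s δ)
  · rw [setIntegral_polarSegment_eq hsδ hF, ← intervalIntegral.integral_const_mul]
    refine intervalIntegral.integral_congr fun r hr ↦ ?_
    rw [uIcc_of_le hsδ] at hr
    have hr0 : 0 < r := hs.trans_le hr.1
    dsimp only
    rw [intervalIntegral.integral_const_mul, intervalIntegral.integral_const_mul,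
      integral_segmentWeight hr0 (by rw [abs_of_pos hs]; exact hr.1)]
    ring
  · rw [integral_undef hF, intervalIntegral.integral_undef
      (mt (integrableOn_polarSegment hs hsδ) hF), mul_zero]

end PolarSegment

section Frame

variable {E : Type*} [NormedAddCommGroup E] [InnerProductSpace ℝ E]

variable {n p : E}

theorem inner_smul_add_smul_left_fst (hn : ‖n‖ = 1) (hnp : ⟪n, p⟫ = 0) (a b : ℝ) :
    ⟪a • n + b • p, n⟫ = a := by
  rw [inner_add_left, real_inner_smul_left, real_inner_smul_left, real_inner_self_eq_norm_sq,
    hn, real_inner_comm, hnp]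
  ring

theorem inner_smul_add_smul_left_snd (hp : ‖p‖ = 1) (hnp : ⟪n, p⟫ = 0) (a b : ℝ) :
    ⟪a • n + b • p, p⟫ = b := by
  rw [inner_add_left, real_inner_smul_left, real_inner_smul_left, real_inner_self_eq_norm_sq,
    hp, hnp]
  ring

theorem norm_smul_add_smul (hn : ‖n‖ = 1) (hp : ‖p‖ = 1) (hnp : ⟪n, p⟫ = 0) (a b : ℝ) :
    ‖a • n + b • p‖ = √(a ^ 2 + b ^ 2) := by
  rw [norm_eq_sqrt_real_inner, inner_add_right, real_inner_smul_right, real_inner_smul_right,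
    inner_smul_add_smul_left_fst hn hnp, inner_smul_add_smul_left_snd hp hnp]
  ring_nf

theorem orthonormal_pair (hn : ‖n‖ = 1) (hp : ‖p‖ = 1) (hnp : ⟪n, p⟫ = 0) :
    Orthonormal ℝ ![n, p] := by
  rw [orthonormal_iff_ite]
  intro i j
  fin_cases i <;> fin_cases j <;> simp [hn, hp, hnp, real_inner_comm]

theorem exists_orthonormalBasis_fin_two (hE : finrank ℝ E = 2) (hn : ‖n‖ = 1) (hp : ‖p‖ = 1)
    (hnp : ⟪n, p⟫ = 0) : ∃ b : OrthonormalBasis (Fin 2) ℝ E, b 0 = n ∧ b 1 = p := by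
  have hon := orthonormal_pair hn hp hnp
  let b := (basisOfOrthonormalOfCardEqFinrank hon (by simp [hE])).toOrthonormalBasis
    (by rwa [coe_basisOfOrthonormalOfCardEqFinrank])
  exact ⟨b, by simp [b], by simp [b]⟩

namespace OrthonormalBasis

variable [MeasurableSpace E] [BorelSpace E] (b : OrthonormalBasis (Fin 2) ℝ E) (x : E)

noncomputable def affineCoords : ℝ × ℝ ≃ᵐ E :=
  MeasurableEquiv.finTwoArrow.symm.trans <| (MeasurableEquiv.toLp 2 (Fin 2 → ℝ)).trans <|
    b.measurableEquiv.symm.trans (Homeomorph.addLeft x).toMeasurableEquiv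

theorem affineCoords_apply (q : ℝ × ℝ) :
    b.affineCoords x q = x + (q.1 • b 0 + q.2 • b 1) := by
  have : b.affineCoords x q = x + b.repr.symm (WithLp.toLp 2 ![q.1, q.2]) := rfl
  rw [this, ← b.sum_repr_symm, Fin.sum_univ_two]
  rfl

theorem affineCoords_polarCoord_symm_sub (q : ℝ × ℝ) :
    b.affineCoords x (polarCoord.symm q) - x =
      (q.1 * cos q.2) • b 0 + (q.1 * sin q.2) • b 1 := by
  rw [affineCoords_apply, polarCoord_symm_apply, add_sub_cancel_left]

theorem inner_affineCoords_polarCoord_symm_sub_zero (q : ℝ × ℝ) :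
    ⟪b.affineCoords x (polarCoord.symm q) - x, b 0⟫ = q.1 * cos q.2 := by
  rw [affineCoords_polarCoord_symm_sub, inner_smul_add_smul_left_fst (b.orthonormal.1 0)
    (b.orthonormal.2 (by decide))]

theorem inner_affineCoords_polarCoord_symm_sub_one (q : ℝ × ℝ) :
    ⟪b.affineCoords x (polarCoord.symm q) - x, b 1⟫ = q.1 * sin q.2 := by
  rw [affineCoords_polarCoord_symm_sub, inner_smul_add_smul_left_snd (b.orthonormal.1 1)
    (b.orthonormal.2 (by decide))]

theorem dist_affineCoords_polarCoord_symm {q : ℝ × ℝ} (hq : q ∈ polarCoord.target) :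
    dist x (b.affineCoords x (polarCoord.symm q)) = q.1 := by
  rw [dist_comm, dist_eq_norm, affineCoords_polarCoord_symm_sub,
    norm_smul_add_smul (b.orthonormal.1 0) (b.orthonormal.1 1) (b.orthonormal.2 (by decide)),
    mul_pow, mul_pow, ← mul_add, cos_sq_add_sin_sq, mul_one, sqrt_sq hq.1.le]

theorem preimage_segment_inter_target {s δ : ℝ} (hs : 0 ≤ s) :
    polarCoord.symm ⁻¹' (b.affineCoords x ⁻¹' {y | dist y x < δ ∧ s < ⟪y - x, b 0⟫}) ∩
      polarCoord.target = polarSegment s δ := by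
  ext q
  simp only [mem_inter_iff, mem_preimage, mem_ofPred_eq,
    inner_affineCoords_polarCoord_symm_sub_zero]
  constructor
  · rintro ⟨⟨hδ, hcos⟩, hq⟩
    rw [dist_comm, b.dist_affineCoords_polarCoord_symm x hq] at hδ
    exact (mem_polarSegment_iff hq).mpr ⟨hδ, hcos⟩
  · intro hseg
    have hq := polarSegment_subset_target hs hseg
    rw [dist_comm, b.dist_affineCoords_polarCoord_symm x hq]
    exact ⟨(mem_polarSegment_iff hq).mp hseg, hq⟩

variable [FiniteDimensional ℝ E]

theorem measurePreserving_affineCoords : MeasurePreserving (b.affineCoords x) volume volume :=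
  (measurePreserving_add_left volume x).comp <| b.measurePreserving_measurableEquiv.symm.comp <|
    (PiLp.volume_preserving_toLp (Fin 2)).comp (volume_preserving_finTwoArrow ℝ).symm

theorem setIntegral_segment_eq_integral_polarSegment {s δ : ℝ} (hs : 0 < s) (K : ℝ → ℝ) :
    ∫ y in {y | dist y x < δ ∧ s < ⟪y - x, b 0⟫}, K (dist x y) *
        (⟪y - x, b 1⟫ ^ 2 - ⟪y - (x + s • b 0), b 0⟫ ^ 2 + ⟪x - (x + s • b 0), b 0⟫ ^ 2) =
      ∫ q in polarSegment s δ, q.1 * (K q.1 * segmentWeight s q) := by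
  have hshift (y : E) : ⟪y - (x + s • b 0), b 0⟫ = ⟪y - x, b 0⟫ - s := by
    rw [sub_add_eq_sub_sub, inner_sub_left, real_inner_smul_left, real_inner_self_eq_norm_sq,
      b.orthonormal.1 0, one_pow, mul_one]
  have hD : MeasurableSet {y : E | dist y x < δ ∧ s < ⟪y - x, b 0⟫} :=
    (measurableSet_lt (f := fun y ↦ dist y x) (by fun_prop) measurable_const).inter
      (measurableSet_lt (g := fun y ↦ ⟪y - x, b 0⟫) measurable_const (by fun_prop))
  rw [← (b.measurePreserving_affineCoords x).setIntegral_preimage_emb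
    (b.affineCoords x).measurableEmbedding,
    setIntegral_comp_polarCoord_symm _ ((b.affineCoords x).measurable hD),
    b.preimage_segment_inter_target x hs.le]
  refine setIntegral_congr_fun measurableSet_polarSegment fun q hq ↦ ?_
  rw [b.dist_affineCoords_polarCoord_symm x (polarSegment_subset_target hs.le hq),
    hshift, hshift, inner_affineCoords_polarCoord_symm_sub_zero,
    inner_affineCoords_polarCoord_symm_sub_one,
    sub_self, inner_zero_left, segmentWeight]
  ring

end OrthonormalBasis

end Frame

theorem stmt_9_general (J : ℝ → ℝ) (hJnonneg : ∀ r, 0 ≤ r → 0 ≤ J r)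
    (c δ sx : ℝ) (hc : 0 < c) (hsx : 0 < sx) (hsxδ : sx < δ)
    (Jδ : ℝ → ℝ) (hJδ : ∀ r, Jδ r = c / δ ^ 4 * J (r / δ))
    (x : EuclideanSpace ℝ (Fin 2)) (n p : EuclideanSpace ℝ (Fin 2))
    (hn : ‖n‖ = 1) (hp : ‖p‖ = 1) (hnp : ⟪n, p⟫ = 0)
    (xbar : EuclideanSpace ℝ (Fin 2)) (hxbar : xbar = x + sx • n)
    (D : Set (EuclideanSpace ℝ (Fin 2)))
    (hD : D = {y | dist y x < δ ∧ sx < ⟪y - x, n⟫}) :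
    (∫ y in D, Jδ (dist x y) *
        (⟪y - x, p⟫ ^ 2 - ⟪y - xbar, n⟫ ^ 2 + ⟪x - xbar, n⟫ ^ 2)) =
      2 * ∫ r in sx..δ, Jδ r * r ^ 2 * Real.sqrt (1 - (sx / r) ^ 2) * sx ∧
    0 ≤ ∫ y in D, Jδ (dist x y) *
        (⟪y - x, p⟫ ^ 2 - ⟪y - xbar, n⟫ ^ 2 + ⟪x - xbar, n⟫ ^ 2) := by
  obtain ⟨b, rfl, rfl⟩ := exists_orthonormalBasis_fin_two (by simp) hn hp hnp
  have key : (∫ y in D, Jδ (dist x y) *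
        (⟪y - x, b 1⟫ ^ 2 - ⟪y - xbar, b 0⟫ ^ 2 + ⟪x - xbar, b 0⟫ ^ 2)) =
      2 * ∫ r in sx..δ, Jδ r * r ^ 2 * √(1 - (sx / r) ^ 2) * sx := by
    rw [hD, hxbar, b.setIntegral_segment_eq_integral_polarSegment x hsx,
      integral_polarSegment hsx hsxδ.le]
  refine ⟨key, key ▸ mul_nonneg zero_le_two
    (intervalIntegral.integral_nonneg hsxδ.le fun r hr ↦ ?_)⟩
  have hr : 0 ≤ r := hsx.le.trans hr.1
  have hδ : 0 < δ := hsx.trans hsxδ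
  have := hJnonneg (r / δ) (by positivity)
  rw [hJδ]
  positivity

/-- Equation (eqn:intT): the circular-segment integral of the rescaled kernel against
`I_δ(x,y) = |(y−x)·p|² − |(y−x̄)·n|² + |(x−x̄)·n|²`, where `x̄ = x + sₓ n`, reduces to a
one-dimensional radial integral and in particular is nonnegative. -/
theorem stmt_9 (J : ℝ → ℝ) (hJnonneg : ∀ r, 0 ≤ r → 0 ≤ J r)
    (hJsupp : ∀ r, 1 < r → J r = 0)
    (c δ sx : ℝ) (hc : 0 < c) (hδ : 0 < δ) (hsx : 0 < sx) (hsxδ : sx < δ)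
    (Jδ : ℝ → ℝ) (hJδ : ∀ r, Jδ r = c / δ ^ 4 * J (r / δ))
    (x : EuclideanSpace ℝ (Fin 2)) (n p : EuclideanSpace ℝ (Fin 2))
    (hn : ‖n‖ = 1) (hp : ‖p‖ = 1) (hnp : ⟪n, p⟫ = 0)
    (xbar : EuclideanSpace ℝ (Fin 2)) (hxbar : xbar = x + sx • n)
    (D : Set (EuclideanSpace ℝ (Fin 2)))
    (hD : D = {y | dist y x < δ ∧ sx < ⟪y - x, n⟫}) :
    (∫ y in D, Jδ (dist x y) *
        (⟪y - x, p⟫ ^ 2 - ⟪y - xbar, n⟫ ^ 2 + ⟪x - xbar, n⟫ ^ 2)) =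
      2 * ∫ r in sx..δ, Jδ r * r ^ 2 * Real.sqrt (1 - (sx / r) ^ 2) * sx ∧
    0 ≤ ∫ y in D, Jδ (dist x y) *
        (⟪y - x, p⟫ ^ 2 - ⟪y - xbar, n⟫ ^ 2 + ⟪x - xbar, n⟫ ^ 2) :=
  stmt_9_general J hJnonneg c δ sx hc hsx hsxδ Jδ hJδ x n p hn hp hnp xbar hxbar D hD
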